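/- Let H be a k-uniform hypergraph on n vertices with at least one hyperedge. Then the signless Laplacian spread s_Q(H) = q_max(H) − q_min(H) satisfies s_Q(H) > 1. -/

import Mathlib

/-!
Let `v` be a vertex of minimum degree `d`. Testing `Q` on the indicator vector of a hyperedge `e`
gives `q_max ≥ 1 + min_{i ∈ e} d_i`, because each vertex of `e` receives total weight exactly `1`
from the other vertices of `e`. If `v` is isolated, then `q_min ≤ Q v v = 0` while `q_max ≥ 2`.
Otherwise `v` has a neighbour `w`, and the test vector `e_v - t e_w` for small `t > 0` pushes the
Rayleigh quotient strictly below `Q v v = d`, so `q_min < d ≤ q_max - 1`.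
-/

open Finset

/-- The set of hyperedges containing both `i` and `j`. -/
def edgesBetween {n : ℕ} (E : Finset (Finset (Fin n))) (i j : Fin n) :
    Finset (Finset (Fin n)) :=
  E.filter fun e => i ∈ e ∧ j ∈ e

/-- The degree of vertex `i`: the number of hyperedges containing `i`. -/
def hdeg {n : ℕ} (E : Finset (Finset (Fin n))) (i : Fin n) : ℕ :=
  (E.filter fun e => i ∈ e).card

/-- Two (distinct) vertices are adjacent if some hyperedge contains both. -/
def Adj {n : ℕ} (E : Finset (Finset (Fin n))) (i j : Fin n) : Prop :=
  i ≠ j ∧ ∃ e ∈ E, i ∈ e ∧ j ∈ e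

/-- The neighbours of a vertex. -/
noncomputable def neighbors {n : ℕ} (E : Finset (Finset (Fin n))) (i : Fin n) :
    Finset (Fin n) :=
  @Finset.filter _ (fun j => Adj E i j) (Classical.decPred _) Finset.univ

/-- Banerjee's adjacency matrix of a hypergraph: `A i j = ∑_{e ∋ i,j} 1/(|e|-1)`. -/
noncomputable def adjMat {n : ℕ} (E : Finset (Finset (Fin n))) :
    Matrix (Fin n) (Fin n) ℝ :=
  Matrix.of fun i j =>
    if i = j then 0 else ∑ e ∈ edgesBetween E i j, 1 / ((e.card : ℝ) - 1)

/-- The signless Laplacian matrix `Q = D + A`. -/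
noncomputable def signlessLap {n : ℕ} (E : Finset (Finset (Fin n))) :
    Matrix (Fin n) (Fin n) ℝ :=
  Matrix.diagonal (fun i => (hdeg E i : ℝ)) + adjMat E

/-- Largest eigenvalue of a real matrix. -/
noncomputable def qmax {n : ℕ} (M : Matrix (Fin n) (Fin n) ℝ) : ℝ :=
  sSup (spectrum ℝ M)

/-- Smallest eigenvalue of a real matrix. -/
noncomputable def qmin {n : ℕ} (M : Matrix (Fin n) (Fin n) ℝ) : ℝ :=
  sInf (spectrum ℝ M)

/-- A hypergraph is `k`-uniform if every hyperedge has exactly `k` vertices. -/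
def IsUniform {n : ℕ} (k : ℕ) (E : Finset (Finset (Fin n))) : Prop :=
  ∀ e ∈ E, e.card = k

/-- A hypergraph is connected if any two vertices are joined by a walk. -/
def Conn {n : ℕ} (E : Finset (Finset (Fin n))) : Prop :=
  ∀ i j : Fin n, Relation.ReflTransGen (Adj E) i j

open Matrix
open scoped MatrixOrder

section Spectral

variable {n : ℕ} {M : Matrix (Fin n) (Fin n) ℝ}

lemma dotProduct_mulVec_le_qmax (hM : M.IsHermitian) (x : Fin n → ℝ) :
    x ⬝ᵥ M *ᵥ x ≤ qmax M * (x ⬝ᵥ x) := by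
  have hle : M ≤ algebraMap ℝ _ (qmax M) := le_algebraMap_of_spectrum_le
    (fun _ ht => le_csSup finite_real_spectrum.bddAbove ht) hM.isSelfAdjoint
  simpa [sub_mulVec, Algebra.algebraMap_eq_smul_one, smul_mulVec] using
    (le_iff.mp hle).dotProduct_mulVec_nonneg x

lemma qmin_mul_le_dotProduct_mulVec (hM : M.IsHermitian) (x : Fin n → ℝ) :
    qmin M * (x ⬝ᵥ x) ≤ x ⬝ᵥ M *ᵥ x := by
  have hle : algebraMap ℝ _ (qmin M) ≤ M := algebraMap_le_of_le_spectrum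
    (fun _ ht => csInf_le finite_real_spectrum.bddBelow ht) hM.isSelfAdjoint
  simpa [sub_mulVec, Algebra.algebraMap_eq_smul_one, smul_mulVec] using
    (le_iff.mp hle).dotProduct_mulVec_nonneg x

lemma le_qmax_of_le_sum (hM : M.IsHermitian) {s : Finset (Fin n)} (hs : s.Nonempty) {c : ℝ}
    (hc : ∀ i ∈ s, c ≤ ∑ j ∈ s, M i j) : c ≤ qmax M := by
  have hx := dotProduct_mulVec_le_qmax hM fun i => if i ∈ s then 1 else 0
  simp only [dotProduct, mulVec, ite_mul, mul_ite, one_mul, mul_one, zero_mul, mul_zero,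
    sum_ite_mem, univ_inter, inter_self, sum_const, nsmul_eq_mul] at hx
  have hsum : #s * c ≤ ∑ i ∈ s, ∑ j ∈ s, M i j := by
    simpa using card_nsmul_le_sum s _ c hc
  have hcard : (0 : ℝ) < #s := by exact_mod_cast hs.card_pos
  nlinarith

lemma qmin_le_diag (hM : M.IsHermitian) (i : Fin n) : qmin M ≤ M i i := by
  simpa using qmin_mul_le_dotProduct_mulVec hM (Pi.single i 1)

lemma qmin_lt_diag_of_ne_zero (hM : M.IsHermitian) {v w : Fin n} (hvw : v ≠ w)
    (ha : M v w ≠ 0) : qmin M < M v v := by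
  set a := M v w
  set D := M w w - M v v
  -- for this `t` the test vector `e_v - t e_w` has Rayleigh quotient
  -- `M v v + (t ^ 2 * D - 2 * t * a) / (1 + t ^ 2) < M v v`
  set t := a / (|D| + 1)
  have hwv : M w v = a := by simpa using congrFun (congrFun hM v) w
  have hx := qmin_mul_le_dotProduct_mulVec hM (Pi.single v 1 - Pi.single w t)
  simp only [dotProduct_sub, dotProduct_single, Pi.sub_apply, Pi.single_eq_same, ne_eq, hvw,
    not_false_eq_true, Pi.single_eq_of_ne, sub_zero, mul_one, hvw.symm, zero_sub, neg_mul,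
    sub_neg_eq_add, mulVec_sub, mulVec_single, MulOpposite.op_one, one_smul, op_smul_eq_smul,
    sub_dotProduct, single_dotProduct, col_apply, one_mul, hwv, dotProduct_smul, smul_eq_mul] at hx
  have hat : a = t * (|D| + 1) := by simp only [t]; field_simp
  have ht : 0 < t * t := mul_self_pos.mpr (by positivity)
  have hdecrease : t * t * D < 2 * t * a := calc
    t * t * D ≤ t * t * |D| := mul_le_mul_of_nonneg_left (le_abs_self D) ht.le
    _ < 2 * (t * t) * (|D| + 1) := by nlinarith [abs_nonneg D]
    _ = 2 * t * a := by rw [hat]; ring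
  nlinarith

end Spectral

section Hypergraph

variable {n : ℕ} {E : Finset (Finset (Fin n))}

lemma one_le_hdeg {e : Finset (Fin n)} (he : e ∈ E) {i : Fin n} (hi : i ∈ e) : 1 ≤ hdeg E i :=
  card_pos.mpr ⟨e, mem_filter.mpr ⟨he, hi⟩⟩

lemma exists_adj_of_hdeg_pos (hE : ∀ e ∈ E, 2 ≤ #e) {v : Fin n} (hv : 0 < hdeg E v) :
    ∃ w, Adj E v w := by
  obtain ⟨e, he⟩ := card_pos.mp hv
  obtain ⟨heE, hve⟩ := mem_filter.mp he
  obtain ⟨w, hwe, hwv⟩ := exists_mem_ne (hE e heE) v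
  exact ⟨w, hwv.symm, e, heE, hve, hwe⟩

lemma signlessLap_apply_self (i : Fin n) : signlessLap E i i = hdeg E i := by
  simp [signlessLap, adjMat]

lemma signlessLap_apply_of_ne {i j : Fin n} (h : i ≠ j) :
    signlessLap E i j = ∑ e ∈ edgesBetween E i j, 1 / ((#e : ℝ) - 1) := by
  simp [signlessLap, adjMat, h]

lemma signlessLap_isHermitian (E : Finset (Finset (Fin n))) : (signlessLap E).IsHermitian := by
  refine IsHermitian.ext fun i j => ?_
  rcases eq_or_ne i j with rfl | h
  · rfl
  · simp only [star_trivial, signlessLap_apply_of_ne h, signlessLap_apply_of_ne h.symm,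
      edgesBetween, and_comm]

lemma one_div_card_sub_one_le_signlessLap {e : Finset (Fin n)} (he : e ∈ E) {i j : Fin n}
    (hi : i ∈ e) (hj : j ∈ e) (hij : i ≠ j) : 1 / ((#e : ℝ) - 1) ≤ signlessLap E i j := by
  rw [signlessLap_apply_of_ne hij]
  have hmem : e ∈ edgesBetween E i j := mem_filter.mpr ⟨he, hi, hj⟩
  refine single_le_sum (f := fun f => 1 / ((#f : ℝ) - 1)) (fun f hf => ?_) hmem
  have : (1 : ℝ) ≤ #f := by exact_mod_cast card_pos.mpr ⟨i, (mem_filter.mp hf).2.1⟩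
  exact div_nonneg zero_le_one (by linarith)

lemma signlessLap_pos_of_adj {i j : Fin n} (h : Adj E i j) : 0 < signlessLap E i j := by
  obtain ⟨hij, e, he, hi, hj⟩ := h
  have : (2 : ℝ) ≤ #e := by exact_mod_cast one_lt_card.mpr ⟨i, hi, j, hj, hij⟩
  exact (one_div_pos.mpr (by linarith)).trans_le
    (one_div_card_sub_one_le_signlessLap he hi hj hij)

lemma hdeg_add_one_le_sum_signlessLap {e : Finset (Fin n)} (he : e ∈ E) (he2 : 2 ≤ #e)
    {i : Fin n} (hi : i ∈ e) : (hdeg E i : ℝ) + 1 ≤ ∑ j ∈ e, signlessLap E i j := by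
  rw [← add_sum_erase _ _ hi, signlessLap_apply_self]
  have hcard : ((#(e.erase i) : ℕ) : ℝ) = #e - 1 := by
    rw [card_erase_of_mem hi, Nat.cast_sub (by omega), Nat.cast_one]
  have hpos : (0 : ℝ) < #e - 1 := by
    have : (2 : ℝ) ≤ #e := by exact_mod_cast he2
    linarith
  have hsum := card_nsmul_le_sum (e.erase i) (signlessLap E i) (1 / ((#e : ℝ) - 1))
    fun j hj =>
      one_div_card_sub_one_le_signlessLap he hi (mem_of_mem_erase hj) (ne_of_mem_erase hj).symm
  rw [nsmul_eq_mul, hcard, mul_one_div_cancel hpos.ne'] at hsum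
  linarith

lemma le_qmax_signlessLap {e : Finset (Fin n)} (he : e ∈ E) (he2 : 2 ≤ #e) {m : ℕ}
    (hm : ∀ i ∈ e, m ≤ hdeg E i) : (m : ℝ) + 1 ≤ qmax (signlessLap E) :=
  le_qmax_of_le_sum (signlessLap_isHermitian E) (card_pos.mp (by omega)) fun i hi =>
    le_trans (by gcongr; exact_mod_cast hm i hi) (hdeg_add_one_le_sum_signlessLap he he2 hi)

end Hypergraph

theorem stmt_13_general (n k : ℕ) (hk : 2 ≤ k) (E : Finset (Finset (Fin n)))
    (hE : E.Nonempty) (hU : IsUniform k E) :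
    qmax (signlessLap E) - qmin (signlessLap E) > 1 := by
  have hE2 : ∀ e ∈ E, 2 ≤ #e := fun e he => hU e he ▸ hk
  obtain ⟨e, he⟩ := hE
  obtain ⟨i₀, hi₀⟩ := card_pos.mp (by linarith [hE2 e he] : 0 < #e)
  obtain ⟨v, -, hv⟩ := exists_min_image univ (hdeg E) ⟨i₀, mem_univ i₀⟩
  have hQ := signlessLap_isHermitian E
  rcases (hdeg E v).eq_zero_or_pos with hv0 | hvpos
  · have hqmin := qmin_le_diag hQ v
    have hqmax := le_qmax_signlessLap he (hE2 e he) fun i hi => one_le_hdeg he hi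
    rw [signlessLap_apply_self, hv0] at hqmin
    push_cast at hqmin hqmax
    linarith
  · obtain ⟨w, hw⟩ := exists_adj_of_hdeg_pos hE2 hvpos
    have hqmin := qmin_lt_diag_of_ne_zero hQ hw.1 (signlessLap_pos_of_adj hw).ne'
    have hqmax := le_qmax_signlessLap he (hE2 e he) fun i _ => hv i (mem_univ i)
    rw [signlessLap_apply_self] at hqmin
    linarith

theorem stmt_13 (n k : ℕ) (hk : 2 ≤ k) (E : Finset (Finset (Fin n)))
    (hE : E.Nonempty) (hU : IsUniform k E) (hc : Conn E) :
    qmax (signlessLap E) - qmin (signlessLap E) > 1 :=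
  stmt_13_general n k hk E hE hU
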